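/- arXiv:1604.01288 — 8 statements merged into one kernel-verified Lean document; each statement's English description precedes it below -/
import Mathlib

section
/- Let F be an unsatisfiable hitting clause-set with a variable v such that ldeg_F(v) = 1 and ldeg_F(−v) = 1, let C be the unique clause of F containing v and D the unique clause of F containing −v. Then {C, D} is an fs-pair. -/
/-- A clause-set: a finite set of finite sets of integers. -/
abbrev Cls := Finset (Finset ℤ)

/-- A clause: a finite set of nonzero integers, clash-free. -/
def IsClause (C : Finset ℤ) : Prop := (0 : ℤ) ∉ C ∧ ∀ x ∈ C, -x ∉ C

/-- All members are clauses. -/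
def IsClauseSet (F : Cls) : Prop := ∀ C ∈ F, IsClause C

/-- Satisfiability: some clause (partial assignment) meets every clause of `F`. -/
def Sat (F : Cls) : Prop := ∃ S : Finset ℤ, IsClause S ∧ ∀ D ∈ F, (S ∩ D).Nonempty

/-- Hitting: any two distinct clauses clash. -/
def Hitting (F : Cls) : Prop := ∀ C ∈ F, ∀ D ∈ F, C ≠ D → ∃ x ∈ C, -x ∈ D

/-- Unsatisfiable hitting clause-set. -/
def UHit (F : Cls) : Prop := IsClauseSet F ∧ Hitting F ∧ ¬ Sat F

/-- The variables of a clause-set (as absolute values of its literals). -/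
def cvar (F : Cls) : Finset ℤ := F.sup (fun C => C.image (fun x => |x|))

/-- Number of variables. -/
def nvar (F : Cls) : ℕ := (cvar F).card

/-- Deficiency: number of clauses minus number of variables. -/
def deficiency (F : Cls) : ℤ := (F.card : ℤ) - (nvar F : ℤ)

/-- Literal degree. -/
def ldeg (F : Cls) (x : ℤ) : ℕ := (F.filter (fun C => x ∈ C)).card

/-- Variable degree. -/
def vdeg (F : Cls) (v : ℤ) : ℕ := ldeg F v + ldeg F (-v)

/-- Singular variable. -/
def SingularVar (F : Cls) (v : ℤ) : Prop :=
  v ∈ cvar F ∧ min (ldeg F v) (ldeg F (-v)) = 1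

/-- Nonsingular clause-set. -/
def Nonsingular (F : Cls) : Prop := ∀ v, ¬ SingularVar F v

/-- Number of singular variables. -/
def nsv (F : Cls) : ℕ :=
  ((cvar F).filter (fun v => min (ldeg F v) (ldeg F (-v)) = 1)).card

/-- Number of 1-singular variables. -/
def nosv (F : Cls) : ℕ :=
  ((cvar F).filter (fun v => min (ldeg F v) (ldeg F (-v)) = 1 ∧ vdeg F v = 2)).card

/-- Number of singular, non-1-singular variables. -/
def nnosv (F : Cls) : ℕ :=
  ((cvar F).filter (fun v => min (ldeg F v) (ldeg F (-v)) = 1 ∧ vdeg F v ≠ 2)).card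

/-- Full subsumption pair: `{E ∪ {x}, E ∪ {-x}}`. -/
def IsFsPair (P : Cls) : Prop :=
  ∃ (E : Finset ℤ) (x : ℤ), IsClause E ∧ x ≠ 0 ∧ x ∉ E ∧ -x ∉ E ∧
    P = {insert x E, insert (-x) E}

/-- Strict fs-resolvability: an fs-pair whose resolvent is not in `F`, and whose
resolution variable occurs in the rest of `F`. -/
def StrictlyFsResolvable (F : Cls) : Prop :=
  ∃ (E : Finset ℤ) (x : ℤ), IsClause E ∧ x ≠ 0 ∧ x ∉ E ∧ -x ∉ E ∧
    insert x E ∈ F ∧ insert (-x) E ∈ F ∧ E ∉ F ∧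
    |x| ∈ cvar (F \ {insert x E, insert (-x) E})

/-- `F'` is an nfs-flip of `F`: an nfs-pair `{E ∪ {x}, E ∪ {-x,y}} ⊆ F` is replaced
by its flipped pair `{E ∪ {x,-y}, E ∪ {y}}`, which must not intersect `F`. -/
def NfsFlip (F F' : Cls) : Prop :=
  ∃ (E : Finset ℤ) (x y : ℤ), IsClause E ∧ x ≠ 0 ∧ y ≠ 0 ∧ |x| ≠ |y| ∧
    x ∉ E ∧ -x ∉ E ∧ y ∉ E ∧ -y ∉ E ∧
    insert x E ∈ F ∧ insert y (insert (-x) E) ∈ F ∧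
    insert (-y) (insert x E) ∉ F ∧ insert y E ∉ F ∧
    F' = (F \ {insert x E, insert y (insert (-x) E)}) ∪
         {insert (-y) (insert x E), insert y E}

/-- Intersection of all clauses of `F` (for nonempty `F`). -/
def bigInter (F : Cls) : Finset ℤ := (F.sup id).filter (fun x => ∀ C ∈ F, x ∈ C)

/-- Clause-factor: a nonempty `F' ⊆ F` whose residue is unsatisfiable. -/
def ClauseFactor (F F' : Cls) : Prop :=
  F'.Nonempty ∧ F' ⊆ F ∧ ¬ Sat (F'.image (fun E => E \ bigInter F'))

/-- A clause-factor is trivial if it has one clause, or is unsatisfiable and all of `F`. -/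
def TrivialFactor (F F' : Cls) : Prop := F'.card = 1 ∨ (¬ Sat F' ∧ F' = F)

/-- Clause-irreducible: every clause-factor is trivial. -/
def ClauseIrreducible (F : Cls) : Prop := ∀ F', ClauseFactor F F' → TrivialFactor F F'

/-- DP-reduction (variable elimination) on variable `v`. -/
def dp (v : ℤ) (F : Cls) : Cls :=
  ((F ×ˢ F).filter (fun p => p.1 ∩ p.2.image (fun x => -x) = {v})).image
    (fun p => (p.1 ∪ p.2) \ {v, -v}) ∪
  F.filter (fun C => v ∉ C ∧ -v ∉ C)

/-- `x` (or `-x`) occurs in a clause of `F`. -/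
def LitIn (F : Cls) (x : ℤ) : Prop := ∃ C ∈ F, x ∈ C ∨ -x ∈ C

/-- Isomorphism of clause-sets. -/
def Iso (F G : Cls) : Prop :=
  ∃ f : ℤ → ℤ, (∀ x, f (-x) = - f x) ∧
    (∀ x y, LitIn F x → LitIn F y → f x = f y → x = y) ∧
    G = F.image (fun C => C.image f)

/-- The clause-set D3. -/
def D3 : Cls := {({1,2,3} : Finset ℤ), {-1,-2,-3}, {-1,2}, {-2,3}, {-3,1}}

/-- Logical equivalence of clause-sets. -/
def LogEquiv (F G : Cls) : Prop :=
  ∀ S : Finset ℤ, IsClause S →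
    ((∀ D ∈ F, (S ∩ D).Nonempty) ↔ (∀ D ∈ G, (S ∩ D).Nonempty))

lemma uniqClause (F : Cls) (v : ℤ) (h1 : ldeg F v = 1) {C G : Finset ℤ}
    (hC : C ∈ F) (hvC : v ∈ C) (hG : G ∈ F) (hvG : v ∈ G) : G = C := by
  by_contra hne
  have h2 : 1 < (F.filter (fun C => v ∈ C)).card :=
    Finset.one_lt_card.mpr ⟨G, by simp [hG, hvG], C, by simp [hC, hvC], hne⟩
  simp only [ldeg] at h1
  omega

lemma keyB (F : Cls) (hU : UHit F) (v : ℤ) (C D : Finset ℤ)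
    (hC : C ∈ F) (hvC : v ∈ C) (hD : D ∈ F) (hvD : -v ∈ D)
    (h2 : ldeg F (-v) = 1) :
    D.erase (-v) ⊆ C := by
  obtain ⟨hCS, hHit, hSat⟩ := hU
  have hclC := hCS C hC
  have hclD := hCS D hD
  have hv0 : v ≠ 0 := fun h => hclC.1 (h ▸ hvC)
  intro y hy
  rw [Finset.mem_erase] at hy
  obtain ⟨hyv, hyD⟩ := hy
  by_contra hyC
  have hy0 : y ≠ 0 := fun h => hclD.1 (h ▸ hyD)
  set S : Finset ℤ := insert v (insert y ((C.erase v).image (fun x => -x))) with hSdef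
  have hmemS : ∀ a, a ∈ S ↔ a = v ∨ a = y ∨ (-a ∈ C ∧ a ≠ -v) := by
    intro a
    simp only [hSdef, Finset.mem_insert, Finset.mem_image, Finset.mem_erase]
    constructor
    · rintro (h | h | ⟨x, ⟨hx1, hx2⟩, rfl⟩)
      · exact Or.inl h
      · exact Or.inr (Or.inl h)
      · exact Or.inr (Or.inr ⟨by simpa using hx2, fun h => hx1 (by omega)⟩)
    · rintro (h | h | ⟨ha, hav⟩)
      · exact Or.inl h
      · exact Or.inr (Or.inl h)
      · exact Or.inr (Or.inr ⟨-a, ⟨by omega, ha⟩, by ring⟩)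
  have hSclause : IsClause S := by
    constructor
    · intro h
      rw [hmemS] at h
      rcases h with h | h | ⟨h, _⟩
      · exact hv0 h.symm
      · exact hy0 h.symm
      · exact hclC.1 (by simpa using h)
    · intro a ha hna
      rw [hmemS] at ha hna
      rcases ha with ha | ha | ⟨haC, hav⟩
      · rcases hna with h | h | ⟨h, h'⟩
        · exact hv0 (by omega)
        · exact hyv (by omega)
        · exact h' (by omega)
      · rcases hna with h | h | ⟨h, h'⟩
        · exact hyv (by omega)
        · exact hy0 (by omega)
        · exact hyC (ha ▸ (show a ∈ C by simpa using h))
      · rcases hna with h | h | ⟨h, _⟩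
        · exact hav (by omega)
        · exact hyC (h ▸ haC)
        · exact hclC.2 (-a) haC (by simpa using h)
  apply hSat
  refine ⟨S, hSclause, ?_⟩
  intro G hG
  by_cases hGC : G = C
  · exact ⟨v, Finset.mem_inter.mpr ⟨(hmemS v).mpr (Or.inl rfl), hGC ▸ hvC⟩⟩
  by_cases hGD : G = D
  · exact ⟨y, Finset.mem_inter.mpr ⟨(hmemS y).mpr (Or.inr (Or.inl rfl)), hGD ▸ hyD⟩⟩
  obtain ⟨x, hxC, hxG⟩ := hHit C hC G hG (fun h => hGC h.symm)
  by_cases hxv : x = v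
  · exact absurd (uniqClause F (-v) h2 hD hvD hG (hxv ▸ hxG)) hGD
  · refine ⟨-x, Finset.mem_inter.mpr ⟨(hmemS (-x)).mpr (Or.inr (Or.inr ⟨by simpa using hxC, ?_⟩)), hxG⟩⟩
    omega

/-- In a UHIT, the two clauses of a 1-singular variable form an fs-pair. -/
theorem stmt10 (F : Cls) (hU : UHit F) (v : ℤ) (hv : v ∈ cvar F)
    (h1 : ldeg F v = 1) (h2 : ldeg F (-v) = 1)
    (C D : Finset ℤ) (hC : C ∈ F) (hvC : v ∈ C) (hD : D ∈ F) (hvD : -v ∈ D) :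
    IsFsPair {C, D} := by
  have hclC := hU.1 C hC
  have hclD := hU.1 D hD
  have hv0 : v ≠ 0 := fun h => hclC.1 (h ▸ hvC)
  have hvnC : -v ∉ C := fun h => hclC.2 v hvC h
  have hvD' : v ∉ D := fun h => hclD.2 v h hvD
  have hBD : D.erase (-v) ⊆ C := keyB F hU v C D hC hvC hD hvD h2
  have hBC : C.erase v ⊆ D := by
    have := keyB F hU (-v) D C hD hvD hC (by simpa using hvC) (by simpa using h1)
    simpa using this
  have hE : C.erase v = D.erase (-v) := by
    apply Finset.Subset.antisymm
    · intro x hx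
      have hxv : x ≠ v := (Finset.mem_erase.mp hx).1
      have hxC : x ∈ C := (Finset.mem_erase.mp hx).2
      exact Finset.mem_erase.mpr ⟨fun h => hvnC (h ▸ hxC), hBC hx⟩
    · intro x hx
      have hxv : x ≠ -v := (Finset.mem_erase.mp hx).1
      have hxD : x ∈ D := (Finset.mem_erase.mp hx).2
      exact Finset.mem_erase.mpr ⟨fun h => hvD' (h ▸ hxD), hBD hx⟩
  refine ⟨C.erase v, v, ?_, hv0, ?_, ?_, ?_⟩
  · exact ⟨fun h => hclC.1 (Finset.erase_subset _ _ h),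
      fun x hx h => hclC.2 x (Finset.erase_subset _ _ hx) (Finset.erase_subset _ _ h)⟩
  · simp
  · exact fun h => hvnC (Finset.erase_subset _ _ h)
  · rw [Finset.insert_erase hvC, hE, Finset.insert_erase hvD]
end

section
/- Let F be an unsatisfiable hitting clause-set and x a literal with ldeg_F(x) = 1 and ldeg_F(−x) = 2, and let D₁ ≠ D₂ be the two clauses of F containing −x. Then {D₁, D₂} is an fs-pair. -/
namespace Stmt11Aux

lemma mem_negimg {D : Finset ℤ} {a : ℤ} : a ∈ D.image (fun b => -b) ↔ -a ∈ D := by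
  constructor
  · intro h; obtain ⟨b, hb, rfl⟩ := Finset.mem_image.mp h; simpa
  · intro h; exact Finset.mem_image.mpr ⟨-a, h, neg_neg a⟩

lemma isClause_negimg {C : Finset ℤ} (h : IsClause C) : IsClause (C.image (fun b => -b)) := by
  constructor
  · intro h0; exact h.1 (by simpa using mem_negimg.mp h0)
  · intro a ha hna
    exact h.2 (-a) (mem_negimg.mp ha) (by simpa using mem_negimg.mp hna)

lemma isClause_insert {T : Finset ℤ} {a : ℤ} (hT : IsClause T) (h0 : a ≠ 0)
    (h2 : -a ∉ T) : IsClause (insert a T) := by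
  constructor
  · intro h; rcases Finset.mem_insert.mp h with h | h
    · exact h0 h.symm
    · exact hT.1 h
  · intro b hb hnb
    rcases Finset.mem_insert.mp hb with rfl | hb <;> rcases Finset.mem_insert.mp hnb with h | h
    · omega
    · exact h2 h
    · have hab : -a = b := by omega
      exact h2 (hab ▸ hb)
    · exact hT.2 b hb h

lemma isClause_subset {C T : Finset ℤ} (h : IsClause C) (hs : T ⊆ C) : IsClause T :=
  ⟨fun h0 => h.1 (hs h0), fun a ha hna => h.2 a (hs ha) (hs hna)⟩

def TotalOn (F : Cls) (S : Finset ℤ) : Prop :=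
  IsClause S ∧ ∀ v ∈ cvar F, v ∈ S ∨ -v ∈ S

lemma abs_mem_cvar {F : Cls} {D : Finset ℤ} (hD : D ∈ F) {a : ℤ} (ha : a ∈ D) :
    |a| ∈ cvar F :=
  Finset.mem_sup.mpr ⟨D, hD, Finset.mem_image_of_mem _ ha⟩

lemma cover {F : Cls} {S : Finset ℤ} (hS : TotalOn F S) {D : Finset ℤ} (hD : D ∈ F)
    {a : ℤ} (ha : a ∈ D) : a ∈ S ∨ -a ∈ S := by
  have h := hS.2 |a| (abs_mem_cvar hD ha)
  rcases abs_cases a with ⟨he, _⟩ | ⟨he, _⟩ <;> rw [he] at h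
  · exact h
  · rcases h with h | h
    · exact Or.inr h
    · exact Or.inl (by simpa using h)

lemma cvar_nonneg {F : Cls} {v : ℤ} (hv : v ∈ cvar F) : 0 ≤ v := by
  obtain ⟨D, hD, hv⟩ := Finset.mem_sup.mp hv
  obtain ⟨a, _, rfl⟩ := Finset.mem_image.mp hv
  exact abs_nonneg a

lemma cvar_ne_zero {F : Cls} (hF : IsClauseSet F) {v : ℤ} (hv : v ∈ cvar F) : v ≠ 0 := by
  obtain ⟨D, hD, hv⟩ := Finset.mem_sup.mp hv
  obtain ⟨a, ha, rfl⟩ := Finset.mem_image.mp hv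
  intro h; rw [abs_eq_zero] at h; subst h; exact (hF D hD).1 ha

lemma exists_total (F : Cls) (hF : IsClauseSet F) {T : Finset ℤ} (hT : IsClause T) :
    ∃ S, TotalOn F S ∧ T ⊆ S := by
  classical
  refine ⟨T ∪ (cvar F).filter (fun v => v ∉ T ∧ -v ∉ T), ⟨⟨?_, ?_⟩, ?_⟩,
    Finset.subset_union_left⟩
  · intro h0
    rcases Finset.mem_union.mp h0 with h | h
    · exact hT.1 h
    · exact cvar_ne_zero hF (Finset.mem_filter.mp h).1 rfl
  · intro a ha hna
    rcases Finset.mem_union.mp ha with h | h <;> rcases Finset.mem_union.mp hna with h' | h'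
    · exact hT.2 a h h'
    · exact (Finset.mem_filter.mp h').2.2 (by simpa using h)
    · exact (Finset.mem_filter.mp h).2.2 h'
    · have h1 := cvar_nonneg (Finset.mem_filter.mp h).1
      have h2 := cvar_nonneg (Finset.mem_filter.mp h').1
      have ha0 : a = 0 := by omega
      exact cvar_ne_zero hF (Finset.mem_filter.mp h).1 ha0
  · intro v hv
    by_cases h1 : v ∈ T
    · exact Or.inl (Finset.mem_union_left _ h1)
    · by_cases h2 : -v ∈ T
      · exact Or.inr (Finset.mem_union_left _ h2)
      · exact Or.inl (Finset.mem_union_right _ (Finset.mem_filter.mpr ⟨hv, h1, h2⟩))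

lemma fals_exists {F : Cls} (hU : UHit F) {S : Finset ℤ} (hS : TotalOn F S) :
    ∃ D ∈ F, ∀ a ∈ D, a ∉ S := by
  by_contra h
  push_neg at h
  exact hU.2.2 ⟨S, hS.1, fun D hD => by
    obtain ⟨a, ha, haS⟩ := h D hD
    exact ⟨a, Finset.mem_inter.mpr ⟨haS, ha⟩⟩⟩

lemma fals_unique {F : Cls} (hU : UHit F) {S : Finset ℤ} (hS : TotalOn F S)
    {D D' : Finset ℤ} (hD : D ∈ F) (hD' : D' ∈ F)
    (h1 : ∀ a ∈ D, a ∉ S) (h2 : ∀ a ∈ D', a ∉ S) : D = D' := by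
  by_contra hne
  obtain ⟨y, hyD, hyD'⟩ := hU.2.1 D hD D' hD' hne
  rcases cover hS hD hyD with h | h
  · exact h1 y hyD h
  · exact h2 (-y) hyD' h

lemma mem_flip {l a : ℤ} {S : Finset ℤ} :
    a ∈ insert (-l) (S.erase l) ↔ a = -l ∨ (a ∈ S ∧ a ≠ l) := by
  simp only [Finset.mem_insert, Finset.mem_erase]
  tauto

lemma flip_total {F : Cls} {S : Finset ℤ} (hS : TotalOn F S) {l : ℤ} (hl : l ∈ S) :
    TotalOn F (insert (-l) (S.erase l)) := by
  have hl0 : l ≠ 0 := fun h => hS.1.1 (h ▸ hl)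
  refine ⟨⟨?_, ?_⟩, ?_⟩
  · intro h
    rcases mem_flip.mp h with h | ⟨h, _⟩
    · exact hl0 (by omega)
    · exact hS.1.1 h
  · intro a ha hna
    rcases mem_flip.mp ha with h | ⟨h, hne⟩ <;> rcases mem_flip.mp hna with h' | ⟨h', hne'⟩
    · exact hl0 (by omega)
    · exact hne' (by omega)
    · exact hne (by omega)
    · exact hS.1.2 a h h'
  · intro v hv
    rcases hS.2 v hv with h | h
    · by_cases hvl : v = l
      · exact Or.inr (mem_flip.mpr (Or.inl (by omega)))
      · exact Or.inl (mem_flip.mpr (Or.inr ⟨h, hvl⟩))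
    · by_cases hvl : -v = l
      · exact Or.inl (mem_flip.mpr (Or.inl (by omega)))
      · exact Or.inr (mem_flip.mpr (Or.inr ⟨h, hvl⟩))

end Stmt11Aux

open Stmt11Aux

/-- In a UHIT, the two side clauses of a 2-singular variable form an fs-pair. -/
theorem stmt11 (F : Cls) (hU : UHit F) (x : ℤ) (hx : x ≠ 0)
    (h1 : ldeg F x = 1) (h2 : ldeg F (-x) = 2)
    (D₁ D₂ : Finset ℤ) (hne : D₁ ≠ D₂) (hD₁ : D₁ ∈ F) (hD₂ : D₂ ∈ F)
    (hx₁ : -x ∈ D₁) (hx₂ : -x ∈ D₂) :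
    IsFsPair {D₁, D₂} := by
  classical
  obtain ⟨hFc, hHit, hUnsat⟩ := hU
  have hcl₁ := hFc D₁ hD₁
  have hcl₂ := hFc D₂ hD₂
  have hxD₁ : x ∉ D₁ := fun h => hcl₁.2 x h hx₁
  have hxD₂ : x ∉ D₂ := fun h => hcl₂.2 x h hx₂
  -- the unique clause C containing x
  obtain ⟨C, hCeq⟩ := Finset.card_eq_one.mp h1
  have hCmem : C ∈ F.filter (fun C => x ∈ C) := by
    rw [hCeq]; exact Finset.mem_singleton_self C
  have hCF : C ∈ F := (Finset.mem_filter.mp hCmem).1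
  have hxC : x ∈ C := (Finset.mem_filter.mp hCmem).2
  have hclC := hFc C hCF
  have hCuniq : ∀ D ∈ F, x ∈ D → D = C := by
    intro D hD hxD
    have hm : D ∈ F.filter (fun C => x ∈ C) := Finset.mem_filter.mpr ⟨hD, hxD⟩
    rw [hCeq] at hm; exact Finset.mem_singleton.mp hm
  -- D₁, D₂ are the only clauses containing -x
  have hDuniq : ∀ D ∈ F, -x ∈ D → D = D₁ ∨ D = D₂ := by
    intro D hD hxD
    have hsub : ({D₁, D₂} : Cls) ⊆ F.filter (fun C => -x ∈ C) := by
      intro E hE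
      rcases Finset.mem_insert.mp hE with rfl | hE
      · exact Finset.mem_filter.mpr ⟨hD₁, hx₁⟩
      · rw [Finset.mem_singleton.mp hE]; exact Finset.mem_filter.mpr ⟨hD₂, hx₂⟩
    have hcard : (F.filter (fun C => -x ∈ C)).card ≤ ({D₁, D₂} : Cls).card := by
      rw [show (F.filter (fun C => -x ∈ C)).card = 2 from h2, Finset.card_insert_of_notMem (by simpa using hne), Finset.card_singleton]
    have heq := Finset.eq_of_subset_of_card_le hsub hcard
    have hm : D ∈ ({D₁, D₂} : Cls) := by
      rw [heq]; exact Finset.mem_filter.mpr ⟨hD, hxD⟩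
    simpa using hm
  have hUF : UHit F := ⟨hFc, hHit, hUnsat⟩
  -- Step (d): every clause containing -x contains C \ {x}
  have hsubC : ∀ D ∈ F, -x ∈ D → ∀ z ∈ C, z ≠ x → z ∈ D := by
    intro D hD hxD z hzC hzx
    by_contra hzD
    have hz0 : z ≠ 0 := fun h => hclC.1 (h ▸ hzC)
    have hzx' : z ≠ -x := fun h => hclC.2 x hxC (h ▸ hzC)
    have hTcl : IsClause (insert z (D.image (fun b => -b))) := by
      refine isClause_insert (isClause_negimg (hFc D hD)) hz0 ?_
      intro h
      exact hzD (by simpa using mem_negimg.mp h)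
    obtain ⟨S, hStot, hTS⟩ := exists_total F hFc hTcl
    have hzS : z ∈ S := hTS (Finset.mem_insert_self _ _)
    have hnD : ∀ a ∈ D, a ∉ S := by
      intro a haD haS
      have hmem : -a ∈ S :=
        hTS (Finset.mem_insert_of_mem (mem_negimg.mpr (by simpa using haD)))
      exact hStot.1.2 a haS hmem
    have hxS : x ∈ S :=
      hTS (Finset.mem_insert_of_mem (mem_negimg.mpr (by simpa using hxD)))
    have hS'tot := flip_total hStot hxS
    obtain ⟨D', hD'F, hD'fals⟩ := fals_exists hUF hS'tot
    have hxD' : x ∈ D' := by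
      by_contra hxD'
      have hfals : ∀ a ∈ D', a ∉ S := by
        intro a haD' haS
        have haS' : a ∉ insert (-x) (S.erase x) := hD'fals a haD'
        have hax : a = x := by
          by_contra hax
          exact haS' (mem_flip.mpr (Or.inr ⟨haS, hax⟩))
        exact hxD' (hax ▸ haD')
      have hDD : D' = D := fals_unique hUF hStot hD'F hD hfals hnD
      exact hD'fals (-x) (by rw [hDD]; exact hxD) (Finset.mem_insert_self _ _)
    have hD'C : D' = C := hCuniq D' hD'F hxD'
    exact hD'fals z (by rw [hD'C]; exact hzC) (mem_flip.mpr (Or.inr ⟨hzS, hzx⟩))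
  -- the clash literal of D₁, D₂
  obtain ⟨y, hyD₁, hyD₂⟩ := hHit D₁ hD₁ D₂ hD₂ hne
  have hyx : y ≠ x := fun h => hxD₁ (h ▸ hyD₁)
  have hynx : y ≠ -x := by
    intro h; rw [h, neg_neg] at hyD₂; exact hxD₂ hyD₂
  have hy0 : y ≠ 0 := fun h => hcl₁.1 (h ▸ hyD₁)
  have hyC : y ∉ C := by
    intro h
    exact hcl₂.2 y (hsubC D₂ hD₂ hx₂ y h hyx) hyD₂
  have hnyC : -y ∉ C := by
    intro h
    have hnyx : -y ≠ x := fun h' => hynx (by omega)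
    exact hcl₁.2 y hyD₁ (hsubC D₁ hD₁ hx₁ (-y) h hnyx)
  -- Step (g): key lemma
  have key : ∀ A ∈ F, ∀ B ∈ F, ∀ u : ℤ, -x ∈ A → -x ∈ B → u ∈ A → -u ∈ B →
      (∀ D ∈ F, -x ∈ D → D = A ∨ D = B) →
      ∀ z ∈ A, z ≠ -x → z ≠ u → z ∈ C := by
    intro A hA B hB u hxA hxB huA huB hAB z hzA hznx hzu
    by_contra hzC
    have hclA := hFc A hA
    have hclB := hFc B hB
    have hxAn : x ∉ A := fun h => hclA.2 x h hxA
    have hxBn : x ∉ B := fun h => hclB.2 x h hxB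
    have hux : u ≠ x := fun h => hxAn (h ▸ huA)
    have hz0 : z ≠ 0 := fun h => hclA.1 (h ▸ hzA)
    have hu0 : u ≠ 0 := fun h => hclA.1 (h ▸ huA)
    have hnuC : -u ∉ C := by
      intro h
      have hnux : -u ≠ x := fun h' => hxBn (by rw [← h']; exact huB)
      exact hclA.2 u huA (hsubC A hA hxA (-u) h hnux)
    have hTcl : IsClause (insert z (insert (-u) (C.image (fun b => -b)))) := by
      refine isClause_insert (isClause_insert (isClause_negimg hclC) (by omega) ?_) hz0 ?_
      · intro h
        exact hnuC (by simpa using mem_negimg.mp h)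
      · intro h
        rcases Finset.mem_insert.mp h with h | h
        · exact hzu (by omega)
        · exact hzC (by simpa using mem_negimg.mp h)
    obtain ⟨S, hStot, hTS⟩ := exists_total F hFc hTcl
    have hzS : z ∈ S := hTS (Finset.mem_insert_self _ _)
    have hnuS : -u ∈ S := hTS (Finset.mem_insert_of_mem (Finset.mem_insert_self _ _))
    have hnegC : ∀ w ∈ C, -w ∈ S := fun w hw =>
      hTS (Finset.mem_insert_of_mem (Finset.mem_insert_of_mem
        (mem_negimg.mpr (by simpa using hw))))
    have hfalsC : ∀ a ∈ C, a ∉ S := fun a ha haS => hStot.1.2 a haS (hnegC a ha)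
    have hnxS : -x ∈ S := hnegC x hxC
    have hS''tot : TotalOn F (insert x (S.erase (-x))) := by
      have h := flip_total hStot hnxS
      rwa [neg_neg] at h
    obtain ⟨D'', hD''F, hfals''⟩ := fals_exists hUF hS''tot
    have hxS'' : x ∈ insert x (S.erase (-x)) := Finset.mem_insert_self _ _
    have hnxD'' : -x ∈ D'' := by
      by_contra hcon
      have hfals : ∀ a ∈ D'', a ∉ S := by
        intro a ha haS
        have haS'' : a ∉ insert x (S.erase (-x)) := hfals'' a ha
        have hax : a = -x := by
          by_contra hax
          exact haS'' (Finset.mem_insert_of_mem (Finset.mem_erase.mpr ⟨hax, haS⟩))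
        exact hcon (hax ▸ ha)
      have hEq : D'' = C := fals_unique hUF hStot hD''F hCF hfals hfalsC
      exact hfals'' x (by rw [hEq]; exact hxC) hxS''
    rcases hAB D'' hD''F hnxD'' with rfl | rfl
    · exact hfals'' z hzA (Finset.mem_insert_of_mem (Finset.mem_erase.mpr ⟨hznx, hzS⟩))
    · have hnux : -u ≠ -x := fun h => hux (by omega)
      exact hfals'' (-u) huB (Finset.mem_insert_of_mem (Finset.mem_erase.mpr ⟨hnux, hnuS⟩))
  have hD1sub : ∀ z ∈ D₁, z ≠ -x → z ≠ y → z ∈ C :=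
    fun z hz => key D₁ hD₁ D₂ hD₂ y hx₁ hx₂ hyD₁ hyD₂ hDuniq z hz
  have hD2sub : ∀ z ∈ D₂, z ≠ -x → z ≠ -y → z ∈ C := by
    intro z hz hz1 hz2
    exact key D₂ hD₂ D₁ hD₁ (-y) hx₂ hx₁ hyD₂ (by simp [hyD₁])
      (fun D hD h => (hDuniq D hD h).symm) z hz hz1 hz2
  -- assemble the fs-pair
  refine ⟨insert (-x) (C.erase x), y, ?_, hy0, ?_, ?_, ?_⟩
  · refine isClause_insert (isClause_subset hclC (Finset.erase_subset _ _)) (by omega) ?_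
    simp
  · intro h
    rcases Finset.mem_insert.mp h with h | h
    · exact hynx h
    · exact hyC (Finset.mem_of_mem_erase h)
  · intro h
    rcases Finset.mem_insert.mp h with h | h
    · exact hyx (by omega)
    · exact hnyC (Finset.mem_of_mem_erase h)
  · have hE1 : D₁ = insert y (insert (-x) (C.erase x)) := by
      ext a
      simp only [Finset.mem_insert, Finset.mem_erase]
      constructor
      · intro ha
        by_cases ha1 : a = y
        · exact Or.inl ha1
        by_cases ha2 : a = -x
        · exact Or.inr (Or.inl ha2)
        · exact Or.inr (Or.inr ⟨fun h => hxD₁ (h ▸ ha), hD1sub a ha ha2 ha1⟩)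
      · rintro (rfl | rfl | ⟨hax, haC⟩)
        · exact hyD₁
        · exact hx₁
        · exact hsubC D₁ hD₁ hx₁ a haC hax
    have hE2 : D₂ = insert (-y) (insert (-x) (C.erase x)) := by
      ext a
      simp only [Finset.mem_insert, Finset.mem_erase]
      constructor
      · intro ha
        by_cases ha1 : a = -y
        · exact Or.inl ha1
        by_cases ha2 : a = -x
        · exact Or.inr (Or.inl ha2)
        · exact Or.inr (Or.inr ⟨fun h => hxD₂ (h ▸ ha), hD2sub a ha ha2 ha1⟩)
      · rintro (rfl | rfl | ⟨hax, haC⟩)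
        · exact hyD₂
        · exact hx₂
        · exact hsubC D₂ hD₂ hx₂ a haC hax
    rw [hE1, hE2]
end

section
/- Let F be an unsatisfiable hitting clause-set with a variable v ∈ var(F) such that vdeg_F(v) ≤ 3. Then v is a singular variable of F, and F contains an fs-pair as a subset. -/
/-! In a UHIT every total assignment falsifies exactly one clause, so two assignments
differing in one literal `x` falsify either the same clause or two clauses the first of which
contains `x`. Hence no literal of a UHIT is pure, so a variable of degree at most 3 is singular.
Let `C = E ∪ {u}` be the only clause containing `u`. Every assignment falsifying
`K = E ∪ {-u}` then falsifies a clause `D ⊇ K`: flipping `u` shows `-u ∈ D`, and if some `e ∈ E`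
were missing from `D`, making `e` true and then flipping `u` would lead to a second clause containing
`u`. With at most two clauses containing `-u`, either `K` itself is a clause, giving the fs-pair
`{C, K}`, or the two clauses `D₁, D₂ ⊇ K` cover all assignments falsifying `K` and clash outside `K`,
which forces `D₁ = K ∪ {w}`, `D₂ = K ∪ {-w}`. -/

lemma IsClause.ne_zero {C : Finset ℤ} (hC : IsClause C) {x : ℤ} (hx : x ∈ C) : x ≠ 0 :=
  fun h => hC.1 (h ▸ hx)

lemma IsClause.neg_notMem {C : Finset ℤ} (hC : IsClause C) {x : ℤ} (hx : x ∈ C) : -x ∉ C :=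
  hC.2 x hx

lemma IsClause.insert_neg_erase {C : Finset ℤ} (hC : IsClause C) {u : ℤ} (hu : u ∈ C) :
    IsClause (insert (-u) (C.erase u)) := by
  have hu0 := hC.ne_zero hu
  refine ⟨?_, fun x hx hnx => ?_⟩
  · simp only [Finset.mem_insert, Finset.mem_erase, not_or]
    exact ⟨by omega, fun h => hC.1 h.2⟩
  · simp only [Finset.mem_insert, Finset.mem_erase] at hx hnx
    rcases hx with rfl | ⟨hxu, hx⟩ <;> rcases hnx with hnx | ⟨hnxu, hnx⟩
    · omega
    · exact hnxu (neg_neg u)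
    · exact hxu (neg_injective hnx)
    · exact hC.neg_notMem hx hnx

lemma IsClause.mono {C D : Finset ℤ} (hC : IsClause C) (hDC : D ⊆ C) : IsClause D :=
  ⟨fun h => hC.1 (hDC h), fun x hx => fun h => hC.2 x (hDC hx) (hDC h)⟩

/-- A total assignment, given by its set of true literals. -/
structure Assignment where
  trueLits : Set ℤ
  neg_mem_trueLits_iff : ∀ x ≠ 0, -x ∈ trueLits ↔ x ∉ trueLits

namespace Assignment

instance : Membership ℤ Assignment := ⟨fun τ x => x ∈ τ.trueLits⟩

lemma neg_mem_iff (τ : Assignment) {x : ℤ} (hx : x ≠ 0) : -x ∈ τ ↔ x ∉ τ :=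
  τ.neg_mem_trueLits_iff x hx

def setTrue (τ : Assignment) (x : ℤ) : Assignment where
  trueLits := {y | y = x ∨ (y ∈ τ ∧ y ≠ -x)}
  neg_mem_trueLits_iff y hy := by
    show (-y = x ∨ (-y ∈ τ ∧ -y ≠ -x)) ↔ ¬(y = x ∨ (y ∈ τ ∧ y ≠ -x))
    rw [τ.neg_mem_iff hy]
    by_cases hyx : y = x
    · subst hyx; simp [show -y ≠ y by omega]
    by_cases hyx' : y = -x
    · subst hyx'; simp [show -x ≠ x by omega]
    · simp [hyx, hyx', show -y ≠ x by omega]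

@[simp] lemma mem_setTrue {τ : Assignment} {x y : ℤ} : y ∈ τ.setTrue x ↔ y = x ∨ (y ∈ τ ∧ y ≠ -x) :=
  Iff.rfl

def Falsifies (τ : Assignment) (D : Finset ℤ) : Prop := ∀ x ∈ D, x ∉ τ

lemma Falsifies.setTrue {τ : Assignment} {D : Finset ℤ} (h : τ.Falsifies D) {x : ℤ} (hx : x ∉ D) :
    (τ.setTrue x).Falsifies D := by
  intro y hy
  simp only [Assignment.mem_setTrue, not_or, not_and]
  exact ⟨fun h' => hx (h' ▸ hy), fun h' => absurd h' (h y hy)⟩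

lemma exists_falsifies {K : Finset ℤ} (hK : ∀ x ∈ K, -x ∉ K) : ∃ τ : Assignment, τ.Falsifies K :=
  ⟨{ trueLits := {y | -y ∈ K ∨ (y ∉ K ∧ 0 < y)}
     neg_mem_trueLits_iff := fun y hy => by
       show (-(-y) ∈ K ∨ (-y ∉ K ∧ 0 < -y)) ↔ ¬(-y ∈ K ∨ (y ∉ K ∧ 0 < y))
       rw [neg_neg]
       by_cases h1 : y ∈ K
       · simp [h1, hK y h1]
       by_cases h2 : -y ∈ K
       · simp [h1, h2]
       · simp only [h1, h2, false_or, not_false_eq_true, true_and, not_lt]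
         omega },
   fun x hx h => Or.elim h (hK x hx) fun h => h.1 hx⟩

end Assignment


namespace UHit

variable {F : Cls} (hU : UHit F)
include hU

lemma exists_mem_falsifies (τ : Assignment) : ∃ D ∈ F, τ.Falsifies D := by
  classical
  have hS : IsClause ((F.sup id).filter (· ∈ τ)) := by
    refine ⟨fun h0 => ?_, fun x hx hnx => ?_⟩
    · obtain ⟨C, hC, h0⟩ := Finset.mem_sup.1 (Finset.mem_filter.1 h0).1
      exact (hU.1 C hC).1 h0
    · obtain ⟨C, hC, hxC⟩ := Finset.mem_sup.1 (Finset.mem_filter.1 hx).1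
      exact (τ.neg_mem_iff ((hU.1 C hC).ne_zero hxC)).1 (Finset.mem_filter.1 hnx).2
        (Finset.mem_filter.1 hx).2
  have hunsat := hU.2.2
  simp only [Sat, not_exists, not_and, not_forall] at hunsat
  obtain ⟨D, hD, hSD⟩ := hunsat _ hS
  exact ⟨D, hD, fun x hx hxτ => hSD ⟨x, Finset.mem_inter.2
    ⟨Finset.mem_filter.2 ⟨Finset.mem_sup.2 ⟨D, hD, hx⟩, hxτ⟩, hx⟩⟩⟩

lemma eq_of_falsifies {τ : Assignment} {D D' : Finset ℤ} (hD : D ∈ F) (hD' : D' ∈ F)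
    (hτD : τ.Falsifies D) (hτD' : τ.Falsifies D') : D = D' := by
  by_contra hne
  obtain ⟨x, hx, hnx⟩ := hU.2.1 D hD D' hD' hne
  exact hτD' (-x) hnx ((τ.neg_mem_iff ((hU.1 D hD).ne_zero hx)).2 (hτD x hx))

lemma mem_of_falsifies_setTrue {τ : Assignment} {x : ℤ} {D D' : Finset ℤ} (hD : D ∈ F)
    (hD' : D' ∈ F) (hne : D ≠ D') (hτD : τ.Falsifies D) (hτD' : (τ.setTrue x).Falsifies D') :
    x ∈ D := by
  by_contra hx
  exact hne (hU.eq_of_falsifies hD hD' (hτD.setTrue hx) hτD')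

variable {C : Finset ℤ} {u : ℤ} (hC : C ∈ F) (huC : u ∈ C)
include hC huC

lemma neg_mem_of_falsifies {τ : Assignment} (hτ : τ.Falsifies (insert (-u) (C.erase u)))
    {D : Finset ℤ} (hD : D ∈ F) (hτD : τ.Falsifies D) : -u ∈ D := by
  have hCcl := hU.1 C hC
  have hu0 := hCcl.ne_zero huC
  have huτ : u ∈ τ := by
    simpa using mt (τ.neg_mem_iff hu0).2 (hτ (-u) (Finset.mem_insert_self _ _))
  refine hU.mem_of_falsifies_setTrue hD hC (fun h => hτD u (h ▸ huC) huτ) hτD fun y hy => ?_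
  rw [Assignment.mem_setTrue, not_or, not_and_not_right]
  by_cases hyu : y = u
  · subst hyu; omega
  · exact ⟨fun h => hCcl.neg_notMem huC (h ▸ hy), fun hyτ =>
      absurd hyτ (hτ y (Finset.mem_insert_of_mem (Finset.mem_erase.2 ⟨hyu, hy⟩)))⟩

lemma exists_neg_mem : ∃ D ∈ F, -u ∈ D := by
  have hCcl := hU.1 C hC
  have hu0 := hCcl.ne_zero huC
  obtain ⟨τ, hτ⟩ := Assignment.exists_falsifies hCcl.2
  obtain ⟨D, hD, hτD⟩ := hU.exists_mem_falsifies (τ.setTrue u)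
  refine ⟨D, hD, hU.neg_mem_of_falsifies hC huC (fun y hy => ?_) hD hτD⟩
  rcases Finset.mem_insert.1 hy with rfl | hy
  · simp only [Assignment.mem_setTrue]; omega
  · rw [Assignment.mem_setTrue, not_or, not_and_not_right]
    exact ⟨(Finset.mem_erase.1 hy).1, fun h => absurd h (hτ y (Finset.mem_of_mem_erase hy))⟩

variable (huniq : ∀ D ∈ F, u ∈ D → D = C)
include huniq

lemma neg_notMem_of_falsifies {τ : Assignment} {e : ℤ} (he : e ∈ C) (heu : e ≠ u) (heτ : e ∈ τ)
    {D : Finset ℤ} (hD : D ∈ F) (hτD : τ.Falsifies D) : -u ∉ D := by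
  intro hnuD
  have hDcl := hU.1 D hD
  obtain ⟨D', hD', hσD'⟩ := hU.exists_mem_falsifies (τ.setTrue (-u))
  have hnuσ : -u ∈ τ.setTrue (-u) := by simp
  have hD'C : D' ≠ C := by
    rintro rfl
    exact hσD' e he (by simp [heτ, heu])
  have hD'u : u ∈ D' := by
    refine hU.mem_of_falsifies_setTrue hD' hD (fun h => hσD' _ (h ▸ hnuD) hnuσ) hσD' fun y hy => ?_
    have hyu : y ≠ u := fun h => hDcl.neg_notMem hnuD (by rwa [neg_neg, ← h])
    simp [hyu, hτD y hy]
  exact hD'C (huniq D' hD' hD'u)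

lemma subset_of_falsifies {τ : Assignment} (hτ : τ.Falsifies (insert (-u) (C.erase u)))
    {D : Finset ℤ} (hD : D ∈ F) (hτD : τ.Falsifies D) : insert (-u) (C.erase u) ⊆ D := by
  have hnuD := hU.neg_mem_of_falsifies hC huC hτ hD hτD
  refine Finset.insert_subset hnuD fun e he => ?_
  by_contra heD
  obtain ⟨heu, heC⟩ := Finset.mem_erase.1 he
  exact hU.neg_notMem_of_falsifies hC huC huniq heC heu (by simp) hD (hτD.setTrue heD) hnuD

end UHit

lemma eq_insert_neg_of_forall_falsifies {K D₁ D₂ : Finset ℤ} {w : ℤ} (hD₁ : IsClause D₁)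
    (hD₂ : IsClause D₂) (hKD₁ : K ⊆ D₁) (hKD₂ : K ⊆ D₂) (hw : w ∈ D₁) (hnw : -w ∈ D₂)
    (hcover : ∀ τ : Assignment, τ.Falsifies K → τ.Falsifies D₁ ∨ τ.Falsifies D₂) :
    D₂ = insert (-w) K := by
  refine subset_antisymm (fun t ht => ?_) (Finset.insert_subset hnw hKD₂)
  by_contra htK
  obtain ⟨htw, htK⟩ := not_or.1 (Finset.mem_insert.not.1 htK)
  obtain ⟨τ, hτ⟩ := Assignment.exists_falsifies fun x hx => (hD₁.mono hKD₁).neg_notMem hx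
  have hwK : w ∉ K := fun h => hD₂.neg_notMem (hKD₂ h) hnw
  rcases hcover _ ((hτ.setTrue hwK).setTrue htK) with h | h
  · exact h w hw (by simp; omega)
  · exact h t ht (by simp)

theorem UHit.exists_isFsPair_of_ldeg_eq_one {F : Cls} (hU : UHit F) {u : ℤ} (h1 : ldeg F u = 1)
    (h2 : ldeg F (-u) ≤ 2) : ∃ P ⊆ F, IsFsPair P := by
  obtain ⟨C, hCu⟩ := Finset.card_eq_one.1 h1
  have hmemC : ∀ D, D ∈ F ∧ u ∈ D ↔ D = C := fun D => by
    rw [← Finset.mem_singleton, ← hCu, Finset.mem_filter]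
  obtain ⟨hC, huC⟩ := (hmemC C).2 rfl
  have huniq : ∀ D ∈ F, u ∈ D → D = C := fun D hD huD => (hmemC D).1 ⟨hD, huD⟩
  have hCcl := hU.1 C hC
  set K := insert (-u) (C.erase u) with hKdef
  have hK : IsClause K := hCcl.insert_neg_erase huC
  obtain ⟨τ, hτ⟩ := Assignment.exists_falsifies hK.2
  obtain ⟨D₂, hD₂, hτD₂⟩ := hU.exists_mem_falsifies τ
  have hKD₂ := hU.subset_of_falsifies hC huC huniq hτ hD₂ hτD₂
  by_cases hD₂K : D₂ ⊆ K
  · refine ⟨{C, D₂}, Finset.insert_subset hC (Finset.singleton_subset_iff.2 hD₂), C.erase u, u,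
      hCcl.mono (Finset.erase_subset u C), hCcl.ne_zero huC, Finset.notMem_erase u C,
      fun h => hCcl.neg_notMem huC (Finset.mem_of_mem_erase h), ?_⟩
    rw [Finset.insert_erase huC, subset_antisymm hD₂K hKD₂]
  obtain ⟨y, hyD₂, hyK⟩ := Finset.not_subset.1 hD₂K
  obtain ⟨D₁, hD₁, hτD₁⟩ := hU.exists_mem_falsifies (τ.setTrue y)
  have hKD₁ := hU.subset_of_falsifies hC huC huniq (hτ.setTrue hyK) hD₁ hτD₁
  have hne : D₁ ≠ D₂ := by
    rintro rfl
    exact hτD₁ y hyD₂ (by simp)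
  have hnegu : F.filter (-u ∈ ·) = {D₁, D₂} := by
    refine (Finset.eq_of_subset_of_card_le (fun D hD => ?_) ?_).symm
    · rcases Finset.mem_insert.1 hD with rfl | hD
      · exact Finset.mem_filter.2 ⟨hD₁, hKD₁ (Finset.mem_insert_self _ _)⟩
      · rw [Finset.mem_singleton.1 hD]
        exact Finset.mem_filter.2 ⟨hD₂, hKD₂ (Finset.mem_insert_self _ _)⟩
    · rw [Finset.card_pair hne]
      exact h2
  have hcover : ∀ σ : Assignment, σ.Falsifies K → σ.Falsifies D₁ ∨ σ.Falsifies D₂ := by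
    intro σ hσ
    obtain ⟨D, hD, hσD⟩ := hU.exists_mem_falsifies σ
    have hDu : D ∈ F.filter (-u ∈ ·) :=
      Finset.mem_filter.2 ⟨hD, hU.neg_mem_of_falsifies hC huC hσ hD hσD⟩
    rw [hnegu, Finset.mem_insert, Finset.mem_singleton] at hDu
    rcases hDu with rfl | rfl
    exacts [Or.inl hσD, Or.inr hσD]
  have hD₁cl := hU.1 D₁ hD₁
  have hD₂cl := hU.1 D₂ hD₂
  obtain ⟨w, hwD₁, hwD₂⟩ := hU.2.1 D₁ hD₁ D₂ hD₂ hne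
  have hD₂eq := eq_insert_neg_of_forall_falsifies hD₁cl hD₂cl hKD₁ hKD₂ hwD₁ hwD₂ hcover
  have hD₁eq := eq_insert_neg_of_forall_falsifies (w := -w) hD₂cl hD₁cl hKD₂ hKD₁ hwD₂
    (by rwa [neg_neg]) fun σ hσ => (hcover σ hσ).symm
  rw [neg_neg] at hD₁eq
  refine ⟨{D₁, D₂}, Finset.insert_subset hD₁ (Finset.singleton_subset_iff.2 hD₂), K, w, hK,
    hD₁cl.ne_zero hwD₁, fun h => hD₂cl.neg_notMem (hKD₂ h) hwD₂,
    fun h => hD₁cl.neg_notMem hwD₁ (hKD₁ h), ?_⟩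
  rw [hD₁eq, hD₂eq]

lemma ldeg_pos_iff {F : Cls} {x : ℤ} : 0 < ldeg F x ↔ ∃ C ∈ F, x ∈ C := by
  simp [ldeg, Finset.card_pos, Finset.filter_nonempty_iff]

/-- A variable of a UHIT occurring at most three times is singular,
and the UHIT contains an fs-pair. -/
theorem stmt12 (F : Cls) (hU : UHit F) (v : ℤ) (hv : v ∈ cvar F) (h : vdeg F v ≤ 3) :
    SingularVar F v ∧ ∃ P ⊆ F, IsFsPair P := by
  have hocc : (∃ C ∈ F, v ∈ C) ∧ ∃ C ∈ F, -v ∈ C := by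
    obtain ⟨C, hC, x, hx, rfl⟩ : ∃ C ∈ F, ∃ x ∈ C, |x| = v := by
      simpa [cvar, Finset.mem_sup] using hv
    rcases abs_choice x with hx' | hx' <;> rw [hx']
    · exact ⟨⟨C, hC, hx⟩, hU.exists_neg_mem hC hx⟩
    · exact ⟨by simpa using hU.exists_neg_mem hC hx, C, hC, by rwa [neg_neg]⟩
  have hpos := And.intro (ldeg_pos_iff.2 hocc.1) (ldeg_pos_iff.2 hocc.2)
  unfold vdeg at h
  refine ⟨⟨hv, by omega⟩, ?_⟩
  rcases (show ldeg F v = 1 ∨ ldeg F (-v) = 1 by omega) with h1 | h1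
  · exact hU.exists_isFsPair_of_ldeg_eq_one h1 (by omega)
  · exact hU.exists_isFsPair_of_ldeg_eq_one h1 (by rw [neg_neg]; omega)
end

section
/- Let F be an unsatisfiable hitting clause-set, C ∈ F, and x, y ∈ C with x ≠ y. If ldeg_F(x) = 1 then ldeg_F(y) ≥ 2. -/
/-- In a UHIT, if a literal of a clause has degree 1, every other literal of
that clause has degree at least 2. -/
theorem stmt13 (F : Cls) (hU : UHit F) (C : Finset ℤ) (hC : C ∈ F)
    (x y : ℤ) (hx : x ∈ C) (hy : y ∈ C) (hxy : x ≠ y) (h1 : ldeg F x = 1) :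
    2 ≤ ldeg F y := by
  obtain ⟨hcls, hhit, hns⟩ := hU
  by_contra hlt
  push_neg at hlt
  have hy1 : ldeg F y = 1 := by
    have h0 : 0 < ldeg F y :=
      Finset.card_pos.2 ⟨C, Finset.mem_filter.2 ⟨hC, hy⟩⟩
    omega
  have honly : ∀ w : ℤ, ldeg F w = 1 → w ∈ C → ∀ D ∈ F, w ∈ D → D = C := by
    intro w hw hwC D hD hwD
    have h := Finset.card_le_one.1 (le_of_eq hw)
    exact h D (Finset.mem_filter.2 ⟨hD, hwD⟩) C (Finset.mem_filter.2 ⟨hC, hwC⟩)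
  obtain ⟨hC0, hCclash⟩ := hcls C hC
  have hx0 : x ≠ 0 := fun h => hC0 (h ▸ hx)
  have hy0 : y ≠ 0 := fun h => hC0 (h ▸ hy)
  have hnx : -x ∉ C := hCclash x hx
  have hny : -y ∉ C := hCclash y hy
  set N : Finset ℤ := (C \ {x, y}).image (fun z => -z) with hNdef
  set W : Finset ℤ := (cvar F).filter (fun v => v ∉ C ∧ -v ∉ C) with hWdef
  have hmemN : ∀ w : ℤ, w ∈ N ↔ (-w ∈ C ∧ -w ≠ x ∧ -w ≠ y) := by
    intro w
    simp only [hNdef, Finset.mem_image, Finset.mem_sdiff, Finset.mem_insert,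
      Finset.mem_singleton]
    constructor
    · rintro ⟨c, ⟨hc, hne⟩, rfl⟩
      simpa using ⟨hc, by tauto⟩
    · rintro ⟨h1', h2', h3'⟩
      exact ⟨-w, ⟨h1', by tauto⟩, by ring⟩
  have hNnotC : ∀ w ∈ N, w ∉ C := by
    intro w hw
    exact fun hwc => hCclash w hwc (by simpa using ((hmemN w).1 hw).1)
  have hWfacts : ∀ v ∈ W, 0 < v ∧ v ∉ C ∧ -v ∉ C := by
    intro v hv
    rw [hWdef, Finset.mem_filter] at hv
    refine ⟨?_, hv.2⟩
    have hv1 := hv.1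
    rw [cvar, Finset.mem_sup] at hv1
    obtain ⟨D, hD, hvD⟩ := hv1
    obtain ⟨z, hz, rfl⟩ := Finset.mem_image.1 hvD
    have hz0 : z ≠ 0 := fun h => (hcls D hD).1 (h ▸ hz)
    exact abs_pos.2 hz0
  have hkey : ∀ s t : ℤ, (s = x ∨ s = -x) → (t = y ∨ t = -y) →
      IsClause (insert s (insert t (N ∪ W))) ∧
      (∀ D ∈ F, ∀ z ∈ D,
        z ∈ insert s (insert t (N ∪ W)) ∨ -z ∈ insert s (insert t (N ∪ W))) := by
    intro s t hs ht
    have hmemS : ∀ w : ℤ, w ∈ insert s (insert t (N ∪ W)) ↔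
        (w = s ∨ w = t ∨ w ∈ N ∨ w ∈ W) := by
      intro w
      simp [Finset.mem_insert, Finset.mem_union, or_assoc]
    constructor
    · constructor
      · rw [hmemS]
        rintro (h | h | h | h)
        · rcases hs with hs1 | hs1 <;> omega
        · rcases ht with ht1 | ht1 <;> omega
        · have := ((hmemN 0).1 h).1
          simp at this
          exact hC0 this
        · have := (hWfacts 0 h).1; omega
      · intro w hw hnw
        rw [hmemS] at hw hnw
        rcases hw with hw1 | hw1 | hwN | hwW
        · -- w = s
          rcases hnw with h | h | h | h
          · rcases hs with hs1 | hs1 <;> omega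
          · rcases hs with hs1 | hs1 <;> rcases ht with ht1 | ht1
            · exact hnx (by rw [show -x = y by omega]; exact hy)
            · omega
            · omega
            · exact hny (by rw [show -y = x by omega]; exact hx)
          · obtain ⟨n1, n2, n3⟩ := (hmemN (-w)).1 h
            rw [neg_neg] at n1 n2 n3
            rcases hs with hs1 | hs1
            · omega
            · exact hnx (by rw [show -x = w by omega]; exact n1)
          · obtain ⟨q1, q2, q3⟩ := hWfacts (-w) h
            rw [neg_neg] at q3
            rcases hs with hs1 | hs1
            · exact q3 (by rw [show w = x by omega]; exact hx)
            · exact q2 (by rw [show -w = x by omega]; exact hx)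
        · -- w = t
          rcases hnw with h | h | h | h
          · rcases hs with hs1 | hs1 <;> rcases ht with ht1 | ht1
            · exact hny (by rw [show -y = x by omega]; exact hx)
            · omega
            · omega
            · exact hnx (by rw [show -x = y by omega]; exact hy)
          · rcases ht with ht1 | ht1 <;> omega
          · obtain ⟨n1, n2, n3⟩ := (hmemN (-w)).1 h
            rw [neg_neg] at n1 n2 n3
            rcases ht with ht1 | ht1
            · omega
            · exact hny (by rw [show -y = w by omega]; exact n1)
          · obtain ⟨q1, q2, q3⟩ := hWfacts (-w) h
            rw [neg_neg] at q3
            rcases ht with ht1 | ht1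
            · exact q3 (by rw [show w = y by omega]; exact hy)
            · exact q2 (by rw [show -w = y by omega]; exact hy)
        · -- w ∈ N
          obtain ⟨n1, n2, n3⟩ := (hmemN w).1 hwN
          rcases hnw with h | h | h | h
          · rcases hs with hs1 | hs1
            · omega
            · exact hnx (by rw [show -x = -w by omega]; exact n1)
          · rcases ht with ht1 | ht1
            · omega
            · exact hny (by rw [show -y = -w by omega]; exact n1)
          · exact hCclash (-w) n1 (by simpa using ((hmemN (-w)).1 h).1)
          · exact (hWfacts (-w) h).2.1 n1
        · -- w ∈ W
          obtain ⟨p1, p2, p3⟩ := hWfacts w hwW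
          rcases hnw with h | h | h | h
          · rcases hs with hs1 | hs1
            · exact p3 (by rw [show -w = x by omega]; exact hx)
            · exact p2 (by rw [show w = x by omega]; exact hx)
          · rcases ht with ht1 | ht1
            · exact p3 (by rw [show -w = y by omega]; exact hy)
            · exact p2 (by rw [show w = y by omega]; exact hy)
          · exact p2 (by simpa using ((hmemN (-w)).1 h).1)
          · have := (hWfacts (-w) h).1; omega
    · intro D hD z hz
      rw [hmemS, hmemS]
      by_cases hzC : z ∈ C
      · by_cases hzx : z = x
        · rcases hs with hs1 | hs1
          · exact Or.inl (Or.inl (by omega))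
          · exact Or.inr (Or.inl (by omega))
        · by_cases hzy : z = y
          · rcases ht with ht1 | ht1
            · exact Or.inl (Or.inr (Or.inl (by omega)))
            · exact Or.inr (Or.inr (Or.inl (by omega)))
          · exact Or.inr (Or.inr (Or.inr (Or.inl
              ((hmemN (-z)).2 ⟨by simpa using hzC, by simpa using hzx,
                by simpa using hzy⟩))))
      · by_cases hzC' : -z ∈ C
        · by_cases hzx : -z = x
          · rcases hs with hs1 | hs1
            · exact Or.inr (Or.inl (by omega))
            · exact Or.inl (Or.inl (by omega))
          · by_cases hzy : -z = y
            · rcases ht with ht1 | ht1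
              · exact Or.inr (Or.inr (Or.inl (by omega)))
              · exact Or.inl (Or.inr (Or.inl (by omega)))
            · exact Or.inl (Or.inr (Or.inr (Or.inl
                ((hmemN z).2 ⟨hzC', hzx, hzy⟩))))
        · have habs : |z| ∈ cvar F := by
            rw [cvar, Finset.mem_sup]
            exact ⟨D, hD, Finset.mem_image.2 ⟨z, hz, rfl⟩⟩
          rcases le_or_gt 0 z with hpos | hneg
          · have hza : |z| = z := abs_of_nonneg hpos
            rw [hza] at habs
            exact Or.inl (Or.inr (Or.inr (Or.inr
              (Finset.mem_filter.2 ⟨habs, hzC, hzC'⟩))))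
          · have hza : |z| = -z := abs_of_neg hneg
            rw [hza] at habs
            exact Or.inr (Or.inr (Or.inr (Or.inr
              (Finset.mem_filter.2 ⟨habs, hzC', by simpa using hzC⟩))))
  have hget : ∀ s t : ℤ, (s = x ∨ s = -x) → (t = y ∨ t = -y) →
      ∃ D ∈ F, ∀ z ∈ D,
        z ∉ insert s (insert t (N ∪ W)) ∧ -z ∈ insert s (insert t (N ∪ W)) := by
    intro s t hs ht
    obtain ⟨hScl, hStot⟩ := hkey s t hs ht
    by_contra hcon
    push_neg at hcon
    apply hns
    refine ⟨_, hScl, fun D hD => ?_⟩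
    by_contra hemp
    rw [Finset.not_nonempty_iff_eq_empty] at hemp
    obtain ⟨z, hz, hz2⟩ := hcon D hD
    have hznS : z ∉ insert s (insert t (N ∪ W)) := by
      intro hzS
      have hmem : z ∈ insert s (insert t (N ∪ W)) ∩ D := Finset.mem_inter.2 ⟨hzS, hz⟩
      rw [hemp] at hmem
      exact absurd hmem (Finset.notMem_empty z)
    rcases hStot D hD z hz with h | h
    · exact hznS h
    · exact hz2 hznS h
  obtain ⟨D2, hD2F, hD2⟩ := hget x (-y) (Or.inl rfl) (Or.inr rfl)
  obtain ⟨D3, hD3F, hD3⟩ := hget (-x) y (Or.inr rfl) (Or.inl rfl)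
  have hmemS2 : ∀ w : ℤ, w ∈ insert x (insert (-y) (N ∪ W)) ↔
      (w = x ∨ w = -y ∨ w ∈ N ∨ w ∈ W) := by
    intro w; simp [Finset.mem_insert, Finset.mem_union, or_assoc]
  have hmemS3 : ∀ w : ℤ, w ∈ insert (-x) (insert y (N ∪ W)) ↔
      (w = -x ∨ w = y ∨ w ∈ N ∨ w ∈ W) := by
    intro w; simp [Finset.mem_insert, Finset.mem_union, or_assoc]
  have hCD2 : C ≠ D2 := by
    intro h
    exact (hD2 x (h ▸ hx)).1 (Finset.mem_insert_self _ _)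
  have hCD3 : C ≠ D3 := by
    intro h
    exact (hD3 y (h ▸ hy)).1 (Finset.mem_insert_of_mem (Finset.mem_insert_self _ _))
  have hxD3 : x ∉ D3 := by
    intro h
    exact hCD3 ((honly x h1 hx D3 hD3F h).symm)
  have hyD2 : y ∉ D2 := by
    intro h
    exact hCD2 ((honly y hy1 hy D2 hD2F h).symm)
  have hnxD3 : -x ∉ D3 := by
    intro h
    exact (hD3 (-x) h).1 (Finset.mem_insert_self _ _)
  have hnxD2 : -x ∈ D2 := by
    obtain ⟨z, hzC, hzD2⟩ := hhit C hC D2 hD2F hCD2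
    have hzS2 : z ∈ insert x (insert (-y) (N ∪ W)) := by
      have := (hD2 (-z) hzD2).2
      simpa using this
    rcases (hmemS2 z).1 hzS2 with h | h | h | h
    · exact h ▸ hzD2
    · exact absurd hzC (by rw [h]; exact hny)
    · exact absurd hzC (hNnotC z h)
    · exact absurd hzC (hWfacts z h).2.1
  have hD2D3 : D2 ≠ D3 := by
    intro h
    exact hnxD3 (h ▸ hnxD2)
  obtain ⟨z, hzD2, hzD3⟩ := hhit D2 hD2F D3 hD3F hD2D3
  have hz1 := (hD2 z hzD2).2
  have hz2 := (hD3 (-z) hzD3).2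
  rw [neg_neg] at hz2
  rcases (hmemS2 (-z)).1 hz1 with h | h | h | h
  · exact hxD3 (h ▸ hzD3)
  · exact hyD2 (by rw [show y = z by omega]; exact hzD2)
  · obtain ⟨g1, g2, g3⟩ := (hmemN (-z)).1 h
    rw [neg_neg] at g1 g2 g3
    rcases (hmemS3 z).1 hz2 with h' | h' | h' | h'
    · exact hnx (h' ▸ g1)
    · exact g3 h'
    · exact hCclash z g1 (by simpa using ((hmemN z).1 h').1)
    · exact (hWfacts z h').2.1 g1
  · obtain ⟨p1, p2, p3⟩ := hWfacts (-z) h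
    rw [neg_neg] at p3
    rcases (hmemS3 z).1 hz2 with h' | h' | h' | h'
    · exact p2 (by rw [h']; simpa using hx)
    · exact p3 (h' ▸ hy)
    · exact p2 (by simpa using ((hmemN z).1 h').1)
    · have := (hWfacts z h').1; omega
end

section
/- For a clause-set F and a clause C the following are equivalent: (1) F is logically equivalent to {C}; (2) F ≠ ∅, ⋂F = C, and the clause-set {D ∖ C : D ∈ F} is unsatisfiable; (3) there exists an unsatisfiable clause-set G with var(G) ∩ var(C) = ∅ such that F = {C ∪ D : D ∈ G}. -/
lemma clause_subset {C S : Finset ℤ} (h : IsClause C) (hs : S ⊆ C) : IsClause S :=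
  ⟨fun h0 => h.1 (hs h0), fun x hx hnx => h.2 x (hs hx) (hs hnx)⟩

lemma mem_bigInter {F : Cls} {x : ℤ} :
    x ∈ bigInter F ↔ (∃ D ∈ F, x ∈ D) ∧ ∀ D ∈ F, x ∈ D := by
  simp [bigInter, Finset.mem_filter, Finset.mem_sup]

/-- Characterisation of clause-sets logically equivalent to a single clause. -/
theorem stmt15 (F : Cls) (hF : IsClauseSet F) (C : Finset ℤ) (hC : IsClause C) :
    (LogEquiv F {C} ↔
      (F.Nonempty ∧ bigInter F = C ∧ ¬ Sat (F.image (fun D => D \ C)))) ∧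
    ((F.Nonempty ∧ bigInter F = C ∧ ¬ Sat (F.image (fun D => D \ C))) ↔
      (∃ G : Cls, IsClauseSet G ∧ ¬ Sat G ∧
        Disjoint (cvar G) (C.image (fun x => |x|)) ∧
        F = G.image (fun D => C ∪ D))) := by
  have habs : ∀ {x y : ℤ} {D : Finset ℤ}, IsClause D → x ∈ D → y ∈ D → |x| = |y| → x = y := by
    intro x y D hD hx hy hxy
    rcases abs_eq_abs.mp hxy with h | h
    · exact h
    · exact absurd hx (h ▸ hD.2 y hy)
  have hsingleton : ∀ {x : ℤ}, x ≠ 0 → IsClause {x} := by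
    intro x hx
    refine ⟨by simp [Ne.symm hx], ?_⟩
    intro y hy hny
    simp only [Finset.mem_singleton] at hy hny
    exact hx (by omega)
  constructor
  · constructor
    · -- (1) → (2)
      intro hle
      have hne : F.Nonempty := by
        by_contra hne
        rw [Finset.not_nonempty_iff_eq_empty] at hne
        subst hne
        have := (hle ∅ ⟨by simp, by simp⟩).mp (by simp)
        simpa using this C (Finset.mem_singleton_self C)
      have hbi : bigInter F = C := by
        ext x
        constructor
        · intro hx
          rw [mem_bigInter] at hx
          obtain ⟨⟨D0, hD0, hxD0⟩, hall⟩ := hx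
          have hx0 : x ≠ 0 := fun h => (hF D0 hD0).1 (h ▸ hxD0)
          have := (hle {x} (hsingleton hx0)).mp
            (fun D hD => ⟨x, Finset.mem_inter.mpr ⟨Finset.mem_singleton_self x, hall D hD⟩⟩)
          obtain ⟨y, hy⟩ := this C (Finset.mem_singleton_self C)
          rw [Finset.mem_inter, Finset.mem_singleton] at hy
          exact hy.1 ▸ hy.2
        · intro hx
          have hx0 : x ≠ 0 := fun h => hC.1 (h ▸ hx)
          have := (hle {x} (hsingleton hx0)).mpr
            (by
              intro D hD
              rw [Finset.mem_singleton] at hD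
              exact ⟨x, Finset.mem_inter.mpr ⟨Finset.mem_singleton_self x, hD ▸ hx⟩⟩)
          rw [mem_bigInter]
          refine ⟨?_, ?_⟩
          · obtain ⟨D, hD⟩ := hne
            obtain ⟨y, hy⟩ := this D hD
            rw [Finset.mem_inter, Finset.mem_singleton] at hy
            exact ⟨D, hD, hy.1 ▸ hy.2⟩
          · intro D hD
            obtain ⟨y, hy⟩ := this D hD
            rw [Finset.mem_inter, Finset.mem_singleton] at hy
            exact hy.1 ▸ hy.2
      have hCsub : ∀ D ∈ F, C ⊆ D := by
        intro D hD x hx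
        rw [← hbi, mem_bigInter] at hx
        exact hx.2 D hD
      refine ⟨hne, hbi, ?_⟩
      rintro ⟨S, hS, hSat⟩
      set S' := S.filter (fun x => x ∉ C ∧ -x ∉ C) with hS'
      have hS'c : IsClause S' := clause_subset hS (Finset.filter_subset _ _)
      have hhit : ∀ D ∈ F, (S' ∩ D).Nonempty := by
        intro D hD
        obtain ⟨x, hx⟩ := hSat (D \ C) (Finset.mem_image_of_mem _ hD)
        rw [Finset.mem_inter, Finset.mem_sdiff] at hx
        have hnx : -x ∉ C := by
          intro hnx
          exact (hF D hD).2 x hx.2.1 (hCsub D hD hnx)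
        refine ⟨x, Finset.mem_inter.mpr ⟨?_, hx.2.1⟩⟩
        rw [hS', Finset.mem_filter]
        exact ⟨hx.1, hx.2.2, hnx⟩
      obtain ⟨y, hy⟩ := (hle S' hS'c).mp hhit C (Finset.mem_singleton_self C)
      rw [Finset.mem_inter, hS', Finset.mem_filter] at hy
      exact hy.1.2.1 hy.2
    · -- (2) → (1)
      rintro ⟨hne, hbi, huns⟩ S hS
      have hCsub : ∀ D ∈ F, C ⊆ D := by
        intro D hD x hx
        rw [← hbi, mem_bigInter] at hx
        exact hx.2 D hD
      constructor
      · intro hhit D hD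
        rw [Finset.mem_singleton] at hD
        rw [hD]
        by_contra hc
        rw [Finset.not_nonempty_iff_eq_empty] at hc
        refine huns ⟨S, hS, ?_⟩
        intro E hE
        obtain ⟨D, hD, rfl⟩ := Finset.mem_image.mp hE
        obtain ⟨x, hx⟩ := hhit D hD
        rw [Finset.mem_inter] at hx
        have hxC : x ∉ C := fun h =>
          (Finset.eq_empty_iff_forall_notMem.mp hc x) (Finset.mem_inter.mpr ⟨hx.1, h⟩)
        exact ⟨x, Finset.mem_inter.mpr ⟨hx.1, Finset.mem_sdiff.mpr ⟨hx.2, hxC⟩⟩⟩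
      · intro hhit D hD
        obtain ⟨x, hx⟩ := hhit C (Finset.mem_singleton_self C)
        rw [Finset.mem_inter] at hx
        exact ⟨x, Finset.mem_inter.mpr ⟨hx.1, hCsub D hD hx.2⟩⟩
  · constructor
    · -- (2) → (3)
      rintro ⟨hne, hbi, huns⟩
      have hCsub : ∀ D ∈ F, C ⊆ D := by
        intro D hD x hx
        rw [← hbi, mem_bigInter] at hx
        exact hx.2 D hD
      refine ⟨F.image (fun D => D \ C), ?_, huns, ?_, ?_⟩
      · intro E hE
        obtain ⟨D, hD, rfl⟩ := Finset.mem_image.mp hE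
        exact clause_subset (hF D hD) (Finset.sdiff_subset)
      · rw [Finset.disjoint_left]
        intro a ha hb
        rw [cvar, Finset.mem_sup] at ha
        obtain ⟨E, hE, haE⟩ := ha
        obtain ⟨D, hD, rfl⟩ := Finset.mem_image.mp hE
        obtain ⟨x, hx, rfl⟩ := Finset.mem_image.mp haE
        obtain ⟨y, hy, hxy⟩ := Finset.mem_image.mp hb
        rw [Finset.mem_sdiff] at hx
        have := habs (hF D hD) hx.1 (hCsub D hD hy) hxy.symm
        exact hx.2 (this ▸ hy)
      · rw [Finset.image_image]
        ext E
        simp only [Finset.mem_image, Function.comp]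
        constructor
        · intro hE
          exact ⟨E, hE, Finset.union_sdiff_of_subset (hCsub E hE)⟩
        · rintro ⟨D, hD, rfl⟩
          rwa [Finset.union_sdiff_of_subset (hCsub D hD)]
    · -- (3) → (2)
      rintro ⟨G, hGc, hGu, hdisj, rfl⟩
      have hdisjCD : ∀ D ∈ G, Disjoint C D := by
        intro D hD
        rw [Finset.disjoint_left]
        intro x hxC hxD
        exact Finset.disjoint_left.mp hdisj
          (Finset.mem_sup.mpr ⟨D, hD, Finset.mem_image_of_mem _ hxD⟩)
          (Finset.mem_image_of_mem _ hxC)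
      have hGne : G.Nonempty := by
        by_contra hne
        rw [Finset.not_nonempty_iff_eq_empty] at hne
        exact hGu ⟨∅, ⟨by simp, by simp⟩, by simp [hne]⟩
      refine ⟨hGne.image _, ?_, ?_⟩
      · ext x
        rw [mem_bigInter]
        constructor
        · rintro ⟨⟨E, hE, hxE⟩, hall⟩
          by_contra hxC
          have hx0 : x ≠ 0 := by
            obtain ⟨D, hD, rfl⟩ := Finset.mem_image.mp hE
            rw [Finset.mem_union] at hxE
            rcases hxE with h | h
            · exact absurd h hxC
            · exact fun h0 => (hGc D hD).1 (h0 ▸ h)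
          refine hGu ⟨{x}, hsingleton hx0, ?_⟩
          intro D hD
          have := hall (C ∪ D) (Finset.mem_image_of_mem _ hD)
          rw [Finset.mem_union] at this
          rcases this with h | h
          · exact absurd h hxC
          · exact ⟨x, Finset.mem_inter.mpr ⟨Finset.mem_singleton_self x, h⟩⟩
        · intro hx
          obtain ⟨D, hD⟩ := hGne
          refine ⟨⟨C ∪ D, Finset.mem_image_of_mem _ hD, Finset.mem_union_left _ hx⟩, ?_⟩
          intro E hE
          obtain ⟨D', hD', rfl⟩ := Finset.mem_image.mp hE
          exact Finset.mem_union_left _ hx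
      · have : (G.image (fun D => C ∪ D)).image (fun D => D \ C) = G := by
          rw [Finset.image_image]
          ext E
          simp only [Finset.mem_image, Function.comp]
          constructor
          · rintro ⟨D, hD, rfl⟩
            rwa [Finset.union_sdiff_cancel_left (hdisjCD D hD)]
          · intro hE
            exact ⟨E, hE, Finset.union_sdiff_cancel_left (hdisjCD E hE)⟩
        rw [this]
        exact hGu
end

section
/- Let F be an unsatisfiable hitting clause-set and ∅ ≠ F' ⊆ F. The following are equivalent: (1) the clause-set {E ∖ ⋂F' : E ∈ F'} is unsatisfiable (i.e., F' is a clause-factor of F); (2) for every E ∈ F ∖ F' one has (⋂F') ∩ (−E) ≠ ∅; (3) the clause-set (F ∖ F') ∪ {⋂F'} is an unsatisfiable hitting clause-set. -/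
lemma mem_negimg {E : Finset ℤ} {x : ℤ} : x ∈ E.image (fun y => -y) ↔ -x ∈ E := by
  simp only [Finset.mem_image]
  constructor
  · rintro ⟨y, hy, rfl⟩; simpa
  · intro h; exact ⟨-x, h, neg_neg x⟩

lemma mem_bigInter_s16 {F' : Cls} (hne : F'.Nonempty) {x : ℤ} :
    x ∈ bigInter F' ↔ ∀ C ∈ F', x ∈ C := by
  unfold bigInter
  simp only [Finset.mem_filter, Finset.mem_sup, id]
  constructor
  · rintro ⟨_, h⟩; exact h
  · intro h
    obtain ⟨C, hC⟩ := hne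
    exact ⟨⟨C, hC, h C hC⟩, h⟩

/-- Equivalent characterisations of clause-factors of a UHIT. -/
theorem stmt16 (F : Cls) (hU : UHit F) (F' : Cls) (hne : F'.Nonempty) (hsub : F' ⊆ F) :
    (¬ Sat (F'.image (fun E => E \ bigInter F')) ↔
      ∀ E ∈ F \ F', (bigInter F' ∩ E.image (fun x => -x)).Nonempty) ∧
    ((∀ E ∈ F \ F', (bigInter F' ∩ E.image (fun x => -x)).Nonempty) ↔
      UHit ((F \ F') ∪ {bigInter F'})) := by
  obtain ⟨hCS, hHit, hUnsat⟩ := hU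
  obtain ⟨E0, hE0⟩ := hne
  set I := bigInter F' with hIdef
  have hmemI : ∀ x : ℤ, x ∈ I ↔ ∀ C ∈ F', x ∈ C := fun x => mem_bigInter_s16 ⟨E0, hE0⟩
  have hIsub : ∀ C ∈ F', I ⊆ C := fun C hC x hx => (hmemI x).mp hx C hC
  have hIcl : IsClause I := by
    obtain hc := hCS E0 (hsub hE0)
    exact ⟨fun h => hc.1 (hIsub E0 hE0 h),
      fun x hx hnx => hc.2 x (hIsub E0 hE0 hx) (hIsub E0 hE0 hnx)⟩
  have main2 : (∀ E ∈ F \ F', (I ∩ E.image (fun x => -x)).Nonempty) ↔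
      UHit ((F \ F') ∪ {I}) := by
    constructor
    · intro h2
      refine ⟨?_, ?_, ?_⟩
      · intro C hC
        rw [Finset.mem_union, Finset.mem_singleton] at hC
        rcases hC with hC | rfl
        · exact hCS C (Finset.mem_sdiff.mp hC).1
        · exact hIcl
      · intro C hC D hD hne'
        rw [Finset.mem_union, Finset.mem_singleton] at hC hD
        rcases hC with hC | rfl <;> rcases hD with hD | rfl
        · exact hHit C (Finset.mem_sdiff.mp hC).1 D (Finset.mem_sdiff.mp hD).1 hne'
        · obtain ⟨z, hz⟩ := h2 C hC
          rw [Finset.mem_inter] at hz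
          exact ⟨-z, mem_negimg.mp hz.2, by simpa using hz.1⟩
        · obtain ⟨z, hz⟩ := h2 D hD
          rw [Finset.mem_inter] at hz
          exact ⟨z, hz.1, mem_negimg.mp hz.2⟩
        · exact absurd rfl hne'
      · rintro ⟨T, hTcl, hTsat⟩
        apply hUnsat
        refine ⟨T, hTcl, ?_⟩
        intro D hD
        by_cases hD' : D ∈ F'
        · obtain ⟨x, hx⟩ := hTsat I (Finset.mem_union_right _ (Finset.mem_singleton_self I))
          rw [Finset.mem_inter] at hx
          exact ⟨x, Finset.mem_inter.mpr ⟨hx.1, hIsub D hD' hx.2⟩⟩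
        · exact hTsat D (Finset.mem_union_left _ (Finset.mem_sdiff.mpr ⟨hD, hD'⟩))
    · intro hG E hE
      obtain ⟨hGcs, hGhit, hGuns⟩ := hG
      rw [Finset.mem_sdiff] at hE
      by_cases hEI : E = I
      · exfalso
        have hne0 : E ≠ E0 := fun h => hE.2 (h ▸ hE0)
        obtain ⟨x, hx1, hx2⟩ := hHit E hE.1 E0 (hsub hE0) hne0
        exact (hCS E0 (hsub hE0)).2 x (hIsub E0 hE0 (hEI ▸ hx1)) hx2
      · obtain ⟨x, hx1, hx2⟩ :=
          hGhit I (Finset.mem_union_right _ (Finset.mem_singleton_self I))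
            E (Finset.mem_union_left _ (Finset.mem_sdiff.mpr hE)) (fun h => hEI h.symm)
        exact ⟨x, Finset.mem_inter.mpr ⟨hx1, mem_negimg.mpr hx2⟩⟩
  refine ⟨?_, main2⟩
  constructor
  · intro hns E hE
    rw [Finset.mem_sdiff] at hE
    by_contra hempty
    rw [Finset.not_nonempty_iff_eq_empty] at hempty
    apply hns
    refine ⟨E.image (fun x => -x), ⟨?_, ?_⟩, ?_⟩
    · intro h
      exact (hCS E hE.1).1 (by simpa using mem_negimg.mp h)
    · intro x hx hnx
      have h1 : -x ∈ E := mem_negimg.mp hx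
      have h2 : x ∈ E := by have := mem_negimg.mp hnx; simpa using this
      exact (hCS E hE.1).2 x h2 h1
    · intro D hD
      rw [Finset.mem_image] at hD
      obtain ⟨E', hE', rfl⟩ := hD
      have hne' : E' ≠ E := fun h => hE.2 (h ▸ hE')
      obtain ⟨x, hx1, hx2⟩ := hHit E' (hsub hE') E hE.1 hne'
      refine ⟨x, Finset.mem_inter.mpr ⟨mem_negimg.mpr hx2, Finset.mem_sdiff.mpr ⟨hx1, ?_⟩⟩⟩
      intro hxI
      have : x ∈ I ∩ E.image (fun y => -y) :=
        Finset.mem_inter.mpr ⟨hxI, mem_negimg.mpr hx2⟩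
      rw [hempty] at this
      exact absurd this (Finset.notMem_empty x)
  · rintro h2 ⟨S, hScl, hSsat⟩
    apply hUnsat
    set T := S.filter (fun x => x ∉ I ∧ -x ∉ I) ∪ I.image (fun x => -x) with hTdef
    have hTmem : ∀ y : ℤ, y ∈ T ↔ (y ∈ S ∧ y ∉ I ∧ -y ∉ I) ∨ -y ∈ I := by
      intro y
      rw [hTdef, Finset.mem_union, Finset.mem_filter, mem_negimg]
    refine ⟨T, ⟨?_, ?_⟩, ?_⟩
    · intro h
      rcases (hTmem 0).mp h with ⟨h0, _⟩ | h0
      · exact hScl.1 h0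
      · exact hIcl.1 (by simpa using h0)
    · intro x hx hnx
      rcases (hTmem x).mp hx with ⟨hs, hi, hni⟩ | hi <;>
        rcases (hTmem (-x)).mp hnx with ⟨hs', hi', hni'⟩ | hi'
      · exact hScl.2 x hs hs'
      · exact hi (by simpa using hi')
      · exact hi' hi
      · exact hIcl.2 (-x) hi (by simpa using hi')
    · intro D hD
      by_cases hD' : D ∈ F'
      · obtain ⟨x, hx⟩ := hSsat (D \ I) (Finset.mem_image_of_mem _ hD')
        rw [Finset.mem_inter, Finset.mem_sdiff] at hx
        refine ⟨x, Finset.mem_inter.mpr ⟨(hTmem x).mpr (Or.inl ⟨hx.1, hx.2.2, ?_⟩), hx.2.1⟩⟩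
        intro hnx
        exact (hCS D (hsub hD')).2 x hx.2.1 (hIsub D hD' hnx)
      · obtain ⟨z, hz⟩ := h2 D (Finset.mem_sdiff.mpr ⟨hD, hD'⟩)
        rw [Finset.mem_inter] at hz
        exact ⟨-z, Finset.mem_inter.mpr ⟨(hTmem (-z)).mpr (Or.inr (by simpa using hz.1)),
          mem_negimg.mp hz.2⟩⟩
end

section
/- Let F be an unsatisfiable hitting clause-set and F' ⊆ F with |F'| = 2. Then F' is a clause-factor of F if and only if F' is an fs-pair. -/
lemma pairClause (a b : ℤ) (ha : a ≠ 0) (hb : b ≠ 0) (hab : a ≠ -b) :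
    IsClause {a, b} := by
  constructor
  · simp only [Finset.mem_insert, Finset.mem_singleton]; omega
  · intro z hz
    simp only [Finset.mem_insert, Finset.mem_singleton] at hz ⊢
    omega

lemma bigInter_pair (C D : Finset ℤ) : bigInter {C, D} = C ∩ D := by
  ext z
  simp [bigInter]
  tauto

/-- The 2-clause clause-factors of a UHIT are exactly its fs-pairs. -/
theorem stmt17 (F : Cls) (hU : UHit F) (F' : Cls) (hsub : F' ⊆ F) (hcard : F'.card = 2) :
    ClauseFactor F F' ↔ IsFsPair F' := by
  obtain ⟨C, D, hCD, rfl⟩ := Finset.card_eq_two.mp hcard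
  have hC : C ∈ F := hsub (by simp)
  have hD : D ∈ F := hsub (by simp)
  have hCc : IsClause C := hU.1 C hC
  have hDc : IsClause D := hU.1 D hD
  obtain ⟨x, hxC, hxD⟩ := hU.2.1 C hC D hD hCD
  have hx0 : x ≠ 0 := fun h => hCc.1 (h ▸ hxC)
  have hxnD : x ∉ D := fun h => hDc.2 x h (by simpa using hxD)
  have hnxC : -x ∉ C := hCc.2 x hxC
  have himg : (({C, D} : Cls)).image (fun E => E \ bigInter {C, D})
      = {C \ D, D \ C} := by
    rw [bigInter_pair]
    have e1 : C \ (C ∩ D) = C \ D := by ext z; simp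
    have e2 : D \ (C ∩ D) = D \ C := by ext z; simp
    simp only [Finset.image_insert, Finset.image_singleton, e1, e2]
  constructor
  · rintro ⟨-, -, hunsat⟩
    rw [himg] at hunsat
    have key1 : ∀ a ∈ C \ D, a = x := by
      intro a ha
      by_contra hax
      obtain ⟨haC, haD⟩ := Finset.mem_sdiff.mp ha
      have ha0 : a ≠ 0 := fun h => hCc.1 (h ▸ haC)
      exact hunsat ⟨{a, -x}, pairClause a (-x) ha0 (by omega) (by omega), by
        intro E hE
        simp at hE
        rcases hE with rfl | rfl
        · exact ⟨a, by simp [haC, haD]⟩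
        · exact ⟨-x, by simp [hxD, hnxC]⟩⟩
    have key2 : ∀ b ∈ D \ C, b = -x := by
      intro b hb
      by_contra hbx
      obtain ⟨hbD, hbC⟩ := Finset.mem_sdiff.mp hb
      have hb0 : b ≠ 0 := fun h => hDc.1 (h ▸ hbD)
      exact hunsat ⟨{x, b}, pairClause x b hx0 hb0 (by omega), by
        intro E hE
        simp at hE
        rcases hE with rfl | rfl
        · exact ⟨x, by simp [hxC, hxnD]⟩
        · exact ⟨b, by simp [hbD, hbC]⟩⟩
    have hCeq : C = insert x (C ∩ D) := by
      ext z
      simp only [Finset.mem_insert, Finset.mem_inter]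
      constructor
      · intro hz
        by_cases hzD : z ∈ D
        · exact Or.inr ⟨hz, hzD⟩
        · exact Or.inl (key1 z (Finset.mem_sdiff.mpr ⟨hz, hzD⟩))
      · rintro (rfl | ⟨h, -⟩) <;> assumption
    have hDeq : D = insert (-x) (C ∩ D) := by
      ext z
      simp only [Finset.mem_insert, Finset.mem_inter]
      constructor
      · intro hz
        by_cases hzC : z ∈ C
        · exact Or.inr ⟨hzC, hz⟩
        · exact Or.inl (key2 z (Finset.mem_sdiff.mpr ⟨hz, hzC⟩))
      · rintro (rfl | ⟨-, h⟩) <;> assumption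
    refine ⟨C ∩ D, x, ⟨fun h => hCc.1 (Finset.mem_inter.mp h).1,
      fun z hz hz' => hCc.2 z (Finset.mem_inter.mp hz).1 (Finset.mem_inter.mp hz').1⟩,
      hx0, fun h => hxnD (Finset.mem_inter.mp h).2,
      fun h => hnxC (Finset.mem_inter.mp h).1, ?_⟩
    rw [← hCeq, ← hDeq]
  · rintro ⟨E, y, hEc, hy0, hyE, hnyE, hP⟩
    refine ⟨by simp, hsub, ?_⟩
    have hpair : ({C, D} : Cls) = {insert y E, insert (-y) E} := hP
    rw [hpair]
    have hbi : bigInter ({insert y E, insert (-y) E} : Cls) = E := by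
      rw [bigInter_pair]
      ext z
      simp only [Finset.mem_inter, Finset.mem_insert]
      constructor
      · rintro ⟨rfl | h1, h2 | h2⟩ <;> first | omega | assumption
      · intro h; exact ⟨Or.inr h, Or.inr h⟩
    rw [hbi]
    simp only [Finset.image_insert, Finset.image_singleton]
    have h1 : insert y E \ E = {y} := by
      ext z
      simp only [Finset.mem_sdiff, Finset.mem_insert, Finset.mem_singleton]
      constructor
      · rintro ⟨rfl | hz, hnz⟩
        · rfl
        · exact absurd hz hnz
      · rintro rfl; exact ⟨Or.inl rfl, hyE⟩
    have h2 : insert (-y) E \ E = {-y} := by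
      ext z
      simp only [Finset.mem_sdiff, Finset.mem_insert, Finset.mem_singleton]
      constructor
      · rintro ⟨rfl | hz, hnz⟩
        · rfl
        · exact absurd hz hnz
      · rintro rfl; exact ⟨Or.inl rfl, hnyE⟩
    rw [h1, h2]
    rintro ⟨S, hSc, hS⟩
    have hy : y ∈ S := by
      have := hS {y} (by simp)
      obtain ⟨z, hz⟩ := this
      simp at hz
      rcases hz with ⟨h, rfl⟩; exact h
    have hny : -y ∈ S := by
      have := hS {-y} (by simp)
      obtain ⟨z, hz⟩ := this
      simp at hz
      rcases hz with ⟨h, rfl⟩; exact h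
    exact hSc.2 y hy hny
end

section
/- Let F be an unsatisfiable hitting clause-set with c(F) ≥ 2 and F' ⊆ F with |F'| = c(F) − 1. Then F' is a clause-factor of F if and only if the unique clause C ∈ F ∖ F' satisfies |C| = 1. -/
/-- The clause-factors of a UHIT with `c(F) - 1` clauses are exactly the complements
of unit-clauses. -/
theorem stmt18 (F : Cls) (hU : UHit F) (hc : 2 ≤ F.card) (F' : Cls) (hsub : F' ⊆ F)
    (hcard : F'.card = F.card - 1) :
    ClauseFactor F F' ↔ ∀ C ∈ F \ F', C.card = 1 := by
  obtain ⟨hCS, hHit, hUnsat⟩ := hU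
  have hdiff : (F \ F').card = 1 := by
    rw [Finset.card_sdiff_of_subset hsub, hcard]; omega
  obtain ⟨C, hCeq⟩ := Finset.card_eq_one.mp hdiff
  have hCmem : C ∈ F \ F' := hCeq ▸ Finset.mem_singleton_self C
  have hCF : C ∈ F := (Finset.mem_sdiff.mp hCmem).1
  have hCF' : C ∉ F' := (Finset.mem_sdiff.mp hCmem).2
  have hne : F'.Nonempty := Finset.card_pos.mp (by omega)
  have hmemF : ∀ D ∈ F, D ∉ F' → D = C := by
    intro D hD hD'
    have h : D ∈ F \ F' := Finset.mem_sdiff.mpr ⟨hD, hD'⟩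
    rw [hCeq] at h; exact Finset.mem_singleton.mp h
  have hImem : ∀ z, z ∈ bigInter F' ↔ ∀ D ∈ F', z ∈ D := by
    intro z
    simp only [bigInter, Finset.mem_filter, Finset.mem_sup, id]
    constructor
    · rintro ⟨_, h⟩; exact h
    · intro h
      obtain ⟨D, hD⟩ := hne
      exact ⟨⟨D, hD, h D hD⟩, h⟩
  constructor
  · rintro ⟨-, -, hUnsat'⟩ D hD
    have hDF : D ∈ F := (Finset.mem_sdiff.mp hD).1
    have hDF' : D ∉ F' := (Finset.mem_sdiff.mp hD).2
    have hDcl : IsClause D := hCS D hDF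
    -- step 1: some literal of D has its complement in bigInter F'
    have hx : ∃ x ∈ D, -x ∈ bigInter F' := by
      by_contra hno
      push_neg at hno
      apply hUnsat'
      refine ⟨D.image (fun x => -x), ⟨?_, ?_⟩, ?_⟩
      · intro h0
        obtain ⟨a, ha, ha0⟩ := Finset.mem_image.mp h0
        exact hDcl.1 (by rw [show a = 0 by omega] at ha; exact ha)
      · intro a ha hna
        obtain ⟨b, hb, hb'⟩ := Finset.mem_image.mp ha
        obtain ⟨c, hc, hc'⟩ := Finset.mem_image.mp hna
        have : c = -b := by omega
        exact hDcl.2 b hb (by rw [show -b = c from this.symm ▸ rfl]; exact this ▸ hc)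
      · intro E hE
        obtain ⟨E0, hE0, rfl⟩ := Finset.mem_image.mp hE
        have hDE0 : D ≠ E0 := fun h => hDF' (h ▸ hE0)
        obtain ⟨x, hxD, hxE⟩ := hHit D hDF E0 (hsub hE0) hDE0
        refine ⟨-x, Finset.mem_inter.mpr ⟨Finset.mem_image.mpr ⟨x, hxD, rfl⟩, ?_⟩⟩
        exact Finset.mem_sdiff.mpr ⟨hxE, fun h => hno x hxD h⟩
    obtain ⟨x, hxD, hxI⟩ := hx
    have hx0 : x ≠ 0 := fun h => hDcl.1 (h ▸ hxD)
    -- step 2: D = {x}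
    have hCx : ∀ y ∈ D, y = x := by
      intro y hy
      by_contra hyx
      have hy0 : y ≠ 0 := fun h => hDcl.1 (h ▸ hy)
      have hynx : y ≠ -x := fun h => hDcl.2 x hxD (h ▸ hy)
      apply hUnsat
      refine ⟨{-x, y}, ⟨?_, ?_⟩, ?_⟩
      · intro h0
        simp only [Finset.mem_insert, Finset.mem_singleton] at h0
        omega
      · intro a ha hna
        simp only [Finset.mem_insert, Finset.mem_singleton] at ha hna
        omega
      · intro E hE
        by_cases hE' : E ∈ F'
        · refine ⟨-x, Finset.mem_inter.mpr ⟨by simp, ?_⟩⟩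
          exact (hImem (-x)).mp hxI E hE'
        · have hEC : E = C := hmemF E hE hE'
          have hDC : D = C := hmemF D hDF hDF'
          refine ⟨y, Finset.mem_inter.mpr ⟨by simp, ?_⟩⟩
          rw [hEC, ← hDC]; exact hy
    rw [Finset.card_eq_one]
    exact ⟨x, Finset.eq_singleton_iff_unique_mem.mpr ⟨hxD, hCx⟩⟩
  · intro h1
    have hC1 : C.card = 1 := h1 C hCmem
    obtain ⟨x, hx⟩ := Finset.card_eq_one.mp hC1
    have hCcl : IsClause C := hCS C hCF
    have hx0 : x ≠ 0 := fun h => hCcl.1 (by rw [hx, h]; simp)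
    refine ⟨hne, hsub, ?_⟩
    rintro ⟨S, hScl, hS⟩
    have hxI : -x ∈ bigInter F' := by
      refine (hImem _).mpr (fun D hD => ?_)
      have hCD : C ≠ D := fun h => hCF' (h ▸ hD)
      obtain ⟨z, hzC, hzD⟩ := hHit C hCF D (hsub hD) hCD
      rw [hx, Finset.mem_singleton] at hzC
      rwa [← hzC]
    apply hUnsat
    refine ⟨insert x (S \ {x, -x}), ⟨?_, ?_⟩, ?_⟩
    · intro h0
      rcases Finset.mem_insert.mp h0 with h | h
      · exact hx0 h.symm
      · exact hScl.1 (Finset.mem_sdiff.mp h).1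
    · intro a ha hna
      rcases Finset.mem_insert.mp ha with h | h <;>
        rcases Finset.mem_insert.mp hna with h' | h'
      · omega
      · subst h
        have := (Finset.mem_sdiff.mp h').2
        simp at this
      · subst h'
        have := (Finset.mem_sdiff.mp h).2
        simp at this
      · exact hScl.2 a (Finset.mem_sdiff.mp h).1 (Finset.mem_sdiff.mp h').1
    · intro E hE
      by_cases hE' : E ∈ F'
      · obtain ⟨s, hs⟩ := hS (E \ bigInter F') (Finset.mem_image.mpr ⟨E, hE', rfl⟩)
        have hsS : s ∈ S := (Finset.mem_inter.mp hs).1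
        have hsE : s ∈ E := (Finset.mem_sdiff.mp (Finset.mem_inter.mp hs).2).1
        have hsI : s ∉ bigInter F' := (Finset.mem_sdiff.mp (Finset.mem_inter.mp hs).2).2
        have hnxE : -x ∈ E := (hImem (-x)).mp hxI E hE'
        have hsx : s ≠ x := fun h => (hCS E (hsub hE')).2 (-x) hnxE (by rw [neg_neg, ← h]; exact hsE)
        have hsnx : s ≠ -x := fun h => hsI (h ▸ hxI)
        refine ⟨s, Finset.mem_inter.mpr ⟨?_, hsE⟩⟩
        exact Finset.mem_insert.mpr (Or.inr (Finset.mem_sdiff.mpr ⟨hsS, by simp [hsx, hsnx]⟩))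
      · have hEC : E = C := hmemF E hE hE'
        refine ⟨x, Finset.mem_inter.mpr ⟨Finset.mem_insert_self x _, ?_⟩⟩
        rw [hEC, hx]; simp
end
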